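/- Let v > 0, a ∈ ℝ, b > 0, and define f : (0,∞) → ℝ by f(γ) = (a − 3/2)·log γ − v/(2γ) − (a+b)·log(1+γ). Set γ* = ((v+2a−3) + √((v+2a−3)² + 4(3+2b)v)) / (2(3+2b)). Then γ* > 0, f′(γ) > 0 for 0 < γ < γ*, f′(γ*) = 0, and f′(γ) < 0 for γ > γ*; consequently f attains its maximum on (0,∞) at the unique point γ*. -/

import Mathlib

/-- The per-coordinate M-step objective in the EM algorithm with the
Generalized Beta Mixture prior, with `v = ⟨w²⟩`. -/
noncomputable def f (v a b γ : ℝ) : ℝ :=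
  (a - 3/2) * Real.log γ - v / (2 * γ) - (a + b) * Real.log (1 + γ)

/-!
Multiplying `f′(γ)` by the positive factor `2γ²(1+γ)` leaves the concave quadratic
`-(3+2b)γ² + (v+2a-3)γ + v`, which is positive at `0` and so has exactly one positive root `γ*`.
Hence `f′` is positive before `γ*` and negative after it, so `f` increases strictly up to `γ*`
and decreases strictly after it.
-/

open Set

section Quadratic

variable {c s v : ℝ}

/-- The larger root of `c x² - s x - v`. -/
noncomputable def positiveRoot (c s v : ℝ) : ℝ :=
  (s + Real.sqrt (s ^ 2 + 4 * c * v)) / (2 * c)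

lemma abs_lt_sqrt_discrim (hc : 0 < c) (hv : 0 < v) : |s| < Real.sqrt (s ^ 2 + 4 * c * v) := by
  have hcv : 0 < 4 * c * v := by positivity
  calc |s| = Real.sqrt (s ^ 2) := (Real.sqrt_sq_eq_abs s).symm
    _ < Real.sqrt (s ^ 2 + 4 * c * v) := Real.sqrt_lt_sqrt (sq_nonneg s) (by linarith)

lemma positiveRoot_pos (hc : 0 < c) (hv : 0 < v) : 0 < positiveRoot c s v :=
  div_pos (by linarith [abs_lt_sqrt_discrim (s := s) hc hv, neg_abs_le s]) (by positivity)

lemma neg_quadratic_eq_mul (hc : c ≠ 0) (hdisc : 0 ≤ s ^ 2 + 4 * c * v) (x : ℝ) :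
    -c * x ^ 2 + s * x + v = (positiveRoot c s v - x) * (c * (x + positiveRoot c s v) - s) := by
  have hr := Real.sq_sqrt hdisc
  unfold positiveRoot
  set r := Real.sqrt (s ^ 2 + 4 * c * v)
  field_simp
  linear_combination -hr

lemma cofactor_pos (hc : 0 < c) (hv : 0 < v) {x : ℝ} (hx : 0 ≤ x) :
    0 < c * (x + positiveRoot c s v) - s := by
  have hroot : 2 * c * positiveRoot c s v = s + Real.sqrt (s ^ 2 + 4 * c * v) := by
    unfold positiveRoot
    field_simp
  nlinarith [abs_lt_sqrt_discrim (s := s) hc hv, le_abs_self s, mul_nonneg hc.le hx]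

lemma neg_quadratic_pos (hc : 0 < c) (hv : 0 < v) {x : ℝ} (hx : 0 ≤ x)
    (hxr : x < positiveRoot c s v) : 0 < -c * x ^ 2 + s * x + v := by
  rw [neg_quadratic_eq_mul hc.ne' (by positivity)]
  exact mul_pos (sub_pos.2 hxr) (cofactor_pos hc hv hx)

lemma neg_quadratic_neg (hc : 0 < c) (hv : 0 < v) {x : ℝ}
    (hxr : positiveRoot c s v < x) : -c * x ^ 2 + s * x + v < 0 := by
  rw [neg_quadratic_eq_mul hc.ne' (by positivity)]
  exact mul_neg_of_neg_of_pos (sub_neg.2 hxr)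
    (cofactor_pos hc hv ((positiveRoot_pos hc hv).le.trans hxr.le))

lemma neg_quadratic_positiveRoot (hc : 0 < c) (hv : 0 < v) :
    -c * positiveRoot c s v ^ 2 + s * positiveRoot c s v + v = 0 := by
  rw [neg_quadratic_eq_mul hc.ne' (by positivity)]
  simp

end Quadratic

lemma lt_of_deriv_pos_of_deriv_neg {F : ℝ → ℝ} {D : Set ℝ} {g : ℝ} (hD : Convex ℝ D)
    (hF : ContinuousOn F D) (hg : g ∈ D)
    (hpos : ∀ x ∈ interior D, x < g → 0 < deriv F x)
    (hneg : ∀ x ∈ interior D, g < x → deriv F x < 0)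
    {x : ℝ} (hx : x ∈ D) (hxg : x ≠ g) :
    F x < F g := by
  rcases hxg.lt_or_gt with hlt | hgt
  · have hmono : StrictMonoOn F (D ∩ Iic g) := by
      refine strictMonoOn_of_deriv_pos (hD.inter (convex_Iic g)) (hF.mono inter_subset_left) ?_
      rw [interior_inter, interior_Iic]
      exact fun y hy => hpos y hy.1 hy.2
    exact hmono ⟨hx, hlt.le⟩ ⟨hg, le_refl g⟩ hlt
  · have hanti : StrictAntiOn F (D ∩ Ici g) := by
      refine strictAntiOn_of_deriv_neg (hD.inter (convex_Ici g)) (hF.mono inter_subset_left) ?_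
      rw [interior_inter, interior_Ici]
      exact fun y hy => hneg y hy.1 hy.2
    exact hanti ⟨hg, le_refl g⟩ ⟨hx, hgt.le⟩ hgt

lemma hasDerivAt_f (v a b : ℝ) {γ : ℝ} (hγ : 0 < γ) :
    HasDerivAt (f v a b)
      ((-(3 + 2 * b) * γ ^ 2 + (v + 2 * a - 3) * γ + v) / (2 * γ ^ 2 * (1 + γ))) γ := by
  have h1γ : 1 + γ ≠ 0 := by positivity
  have hlog := Real.hasDerivAt_log hγ.ne'
  have hlog1 : HasDerivAt (fun x => Real.log (1 + x)) (1 + γ)⁻¹ γ := by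
    simpa using ((hasDerivAt_id γ).const_add 1).log h1γ
  have hinv := (hasDerivAt_inv hγ.ne').const_mul (v / 2)
  have hf : f v a b =
      fun x => (a - 3 / 2) * Real.log x - v / 2 * x⁻¹ - (a + b) * Real.log (1 + x) := by
    funext x
    unfold f
    ring
  rw [hf]
  refine (((hlog.const_mul (a - 3 / 2)).sub hinv).sub (hlog1.const_mul (a + b))).congr_deriv ?_
  field_simp
  ring

lemma deriv_f (v a b : ℝ) {γ : ℝ} (hγ : 0 < γ) :
    deriv (f v a b) γ
      = (-(3 + 2 * b) * γ ^ 2 + (v + 2 * a - 3) * γ + v) / (2 * γ ^ 2 * (1 + γ)) :=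
  (hasDerivAt_f v a b hγ).deriv

/-- The EM update rule: `f` attains its maximum on `(0,∞)` at the unique point `γ*`. -/
theorem em_update_gamma (v a b : ℝ) (hv : 0 < v) (hb : 0 < b) :
    0 < ((v + 2*a - 3) + Real.sqrt ((v + 2*a - 3)^2 + 4*(3 + 2*b)*v)) / (2*(3 + 2*b)) ∧
    (∀ γ : ℝ, 0 < γ →
      γ < ((v + 2*a - 3) + Real.sqrt ((v + 2*a - 3)^2 + 4*(3 + 2*b)*v)) / (2*(3 + 2*b)) →
      0 < deriv (f v a b) γ) ∧
    deriv (f v a b)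
      (((v + 2*a - 3) + Real.sqrt ((v + 2*a - 3)^2 + 4*(3 + 2*b)*v)) / (2*(3 + 2*b))) = 0 ∧
    (∀ γ : ℝ,
      ((v + 2*a - 3) + Real.sqrt ((v + 2*a - 3)^2 + 4*(3 + 2*b)*v)) / (2*(3 + 2*b)) < γ →
      deriv (f v a b) γ < 0) ∧
    (∀ γ : ℝ, 0 < γ →
      γ ≠ ((v + 2*a - 3) + Real.sqrt ((v + 2*a - 3)^2 + 4*(3 + 2*b)*v)) / (2*(3 + 2*b)) →
      f v a b γ <
        f v a b (((v + 2*a - 3) + Real.sqrt ((v + 2*a - 3)^2 + 4*(3 + 2*b)*v)) / (2*(3 + 2*b)))) := by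
  change 0 < positiveRoot (3 + 2 * b) (v + 2 * a - 3) v ∧ _
  set g := positiveRoot (3 + 2 * b) (v + 2 * a - 3) v
  have hc : (0 : ℝ) < 3 + 2 * b := by linarith
  have hg : 0 < g := positiveRoot_pos hc hv
  have hpos : ∀ γ, 0 < γ → γ < g → 0 < deriv (f v a b) γ := fun γ hγ hγg => by
    rw [deriv_f v a b hγ]
    exact div_pos (neg_quadratic_pos hc hv hγ.le hγg) (by positivity)
  have hneg : ∀ γ, g < γ → deriv (f v a b) γ < 0 := fun γ hγg => by
    have hγ := hg.trans hγg
    rw [deriv_f v a b hγ]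
    exact div_neg_of_neg_of_pos (neg_quadratic_neg hc hv hγg) (by positivity)
  have hzero : deriv (f v a b) g = 0 := by
    rw [deriv_f v a b hg, neg_quadratic_positiveRoot hc hv, zero_div]
  have hcont : ContinuousOn (f v a b) (Ioi 0) :=
    fun γ hγ => (hasDerivAt_f v a b hγ).continuousAt.continuousWithinAt
  refine ⟨hg, hpos, hzero, hneg, fun γ hγ hγg => ?_⟩
  refine lt_of_deriv_pos_of_deriv_neg (convex_Ioi 0) hcont hg ?_ (fun γ _ => hneg γ)
    hγ hγg
  rw [interior_Ioi]
  exact hpos
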